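/- Let X, Y be real Banach spaces, U ⊆ X an open star-shaped (with respect to 0) subset, A : U → Y real analytic, and f ∈ L¹([0,1]). Then for every w ∈ U the map τ ↦ f(τ) A(τw) is Pettis integrable over [0,1], and the map from U to Y taking w to ∫₀¹ f(τ) A(τw) dτ is real analytic. -/

import Mathlib

/-!
Around each point `τ • w₀` of the segment `[0, w₀] ⊆ U`, expand `A` in its Taylor series
`Dⁿ A (τ • w₀) / n!`. By `changeOrigin`, these series have a common radius and uniformly bounded
coefficients near any point of `U`, hence, by compactness, along the whole segment. Being canonical,
the Taylor series depends continuously (so measurably) on `τ`, and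
`f τ • A (τ • (w₀ + y)) = ∑ₙ f τ • τⁿ • Dⁿ A (τ • w₀) (y, …, y) / n!` can be integrated term by
term, the series being dominated by `|f|` times a geometric series. This gives a power series
of `Φ` at `w₀`. The Pettis property holds because the Bochner integral commutes with continuous
linear functionals.
-/

open MeasureTheory
open scoped Nat NNReal ENNReal

section PowerSeries

variable {𝕜 E F : Type*} [NontriviallyNormedField 𝕜] [NormedAddCommGroup E] [NormedSpace 𝕜 E]
  [NormedAddCommGroup F] [NormedSpace 𝕜 F]

theorem FormalMultilinearSeries.exists_nnnorm_changeOrigin_mul_pow_le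
    (p : FormalMultilinearSeries 𝕜 E F) {r s : ℝ≥0} (h : ((r + s : ℝ≥0) : ℝ≥0∞) < p.radius) :
    ∃ C : ℝ≥0, ∀ z : E, ‖z‖₊ ≤ r → ∀ n, ‖p.changeOrigin z n‖₊ * s ^ n ≤ C := by
  rw [ENNReal.coe_add] at h
  have hr : (r : ℝ≥0∞) < p.radius := lt_of_le_of_lt le_self_add h
  obtain ⟨-, hsum⟩ := NNReal.summable_sigma.1 (p.changeOriginSeries_summable_aux₁ h)
  refine ⟨∑' k, ∑' l : Σ l : ℕ, { t : Finset (Fin (k + l)) // t.card = l },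
    ‖p (k + l.1)‖₊ * r ^ l.1 * s ^ k, fun z hz n => ?_⟩
  calc ‖p.changeOrigin z n‖₊ * s ^ n
      ≤ (∑' l : Σ l : ℕ, { t : Finset (Fin (n + l)) // t.card = l },
          ‖p (n + l.1)‖₊ * r ^ l.1) * s ^ n := by
        gcongr
        refine (p.nnnorm_changeOrigin_le n (lt_of_le_of_lt (by exact_mod_cast hz) hr)).trans ?_
        have hbound : ∀ l : Σ l : ℕ, { t : Finset (Fin (n + l)) // t.card = l },
            ‖p (n + l.1)‖₊ * ‖z‖₊ ^ l.1 ≤ ‖p (n + l.1)‖₊ * r ^ l.1 := fun l => by gcongr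
        exact Summable.tsum_le_tsum hbound
          (NNReal.summable_of_le hbound (p.changeOriginSeries_summable_aux₂ hr n))
          (p.changeOriginSeries_summable_aux₂ hr n)
    _ = ∑' l : Σ l : ℕ, { t : Finset (Fin (n + l)) // t.card = l },
          ‖p (n + l.1)‖₊ * r ^ l.1 * s ^ n := (NNReal.tsum_mul_right _ _).symm
    _ ≤ _ := hsum.le_tsum' n

theorem HasFPowerSeriesOnBall.hasSum_comp_smul {g : E → F} {p : FormalMultilinearSeries 𝕜 E F}
    {c : 𝕜} {x y : E} {r : ℝ≥0∞} (h : HasFPowerSeriesOnBall g p (c • x) r) (hc : ‖c‖ ≤ 1)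
    (hy : y ∈ Metric.eball 0 r) :
    HasSum (fun n => (c ^ n • p n) fun _ => y) (g (c • (x + y))) := by
  have hcy : c • y ∈ Metric.eball (0 : E) r := by
    rw [Metric.mem_eball, edist_zero_right] at hy ⊢
    calc ‖c • y‖ₑ = ‖c‖ₑ * ‖y‖ₑ := enorm_smul c y
      _ ≤ 1 * ‖y‖ₑ := by
          gcongr
          rw [enorm_eq_nnnorm, ENNReal.coe_le_one_iff, ← NNReal.coe_le_one, coe_nnnorm]
          exact hc
      _ < r := by rwa [one_mul]
  simpa [smul_add, (p _).map_smul_univ fun _ => c] using h.hasSum hcy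

end PowerSeries

section Taylor

variable (𝕜 : Type*) {E F : Type*} [RCLike 𝕜] [NormedAddCommGroup E] [NormedSpace 𝕜 E]
  [NormedAddCommGroup F] [NormedSpace 𝕜 F]

noncomputable def taylorSeries (f : E → F) (x : E) : FormalMultilinearSeries 𝕜 E F :=
  fun n => (n ! : 𝕜)⁻¹ • iteratedFDeriv 𝕜 n f x

def HasUniformTaylorSeriesOn (f : E → F) (s : Set E) (r : ℝ≥0) (C : ℝ) : Prop :=
  ∀ x ∈ s, HasFPowerSeriesOnBall f (taylorSeries 𝕜 f x) x r ∧
    ∀ n, ‖taylorSeries 𝕜 f x n‖ * (r : ℝ) ^ n ≤ C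

variable {𝕜} {f : E → F} {p : FormalMultilinearSeries 𝕜 E F} {x : E} {r : ℝ≥0∞}

theorem HasUniformTaylorSeriesOn.mono {s t : Set E} {r r' : ℝ≥0} {C C' : ℝ}
    (h : HasUniformTaylorSeriesOn 𝕜 f t r C) (hst : s ⊆ t) (hr' : 0 < r') (hr : r' ≤ r)
    (hC : C ≤ C') : HasUniformTaylorSeriesOn 𝕜 f s r' C' := fun x hx =>
  ⟨(h x (hst hx)).1.mono (by exact_mod_cast hr') (by exact_mod_cast hr), fun n =>
    (mul_le_mul_of_nonneg_left (by gcongr) (norm_nonneg _)).trans (((h x (hst hx)).2 n).trans hC)⟩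

variable [CompleteSpace F]

theorem HasFPowerSeriesOnBall.norm_taylorSeries_le (h : HasFPowerSeriesOnBall f p x r) (n : ℕ) :
    ‖taylorSeries 𝕜 f x n‖ ≤ ‖p n‖ := by
  have hD : ‖iteratedFDeriv 𝕜 n f x‖ ≤ n ! * ‖p n‖ := by
    refine ContinuousMultilinearMap.opNorm_le_bound (by positivity) fun v => ?_
    rw [h.iteratedFDeriv_eq_sum_of_completeSpace]
    calc ‖∑ σ : Equiv.Perm (Fin n), p n (fun i => v (σ i))‖
        ≤ ∑ σ : Equiv.Perm (Fin n), ‖p n‖ * ∏ i, ‖v i‖ := by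
          refine norm_sum_le_of_le _ fun σ _ => ((p n).le_opNorm _).trans_eq ?_
          rw [Equiv.prod_comp σ (fun i => ‖v i‖)]
      _ = n ! * ‖p n‖ * ∏ i, ‖v i‖ := by simp [Fintype.card_perm, mul_assoc]
  rw [taylorSeries, norm_smul, norm_inv, RCLike.norm_natCast, inv_mul_le_iff₀ (by positivity)]
  exact hD

theorem HasFPowerSeriesOnBall.hasFPowerSeriesOnBall_taylorSeries
    (h : HasFPowerSeriesOnBall f p x r) : HasFPowerSeriesOnBall f (taylorSeries 𝕜 f x) x r where
  r_le := h.r_le.trans <| ENNReal.le_of_forall_nnreal_lt fun ρ hρ => by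
    obtain ⟨C, -, hC⟩ := p.norm_mul_pow_le_of_lt_radius hρ
    exact (taylorSeries 𝕜 f x).le_radius_of_bound C fun n =>
      (mul_le_mul_of_nonneg_right (h.norm_taylorSeries_le n) (by positivity)).trans (hC n)
  r_pos := h.r_pos
  hasSum hy := h.hasSum_iteratedFDeriv hy

theorem HasFPowerSeriesOnBall.exists_hasUniformTaylorSeriesOn_ball
    (h : HasFPowerSeriesOnBall f p x r) :
    ∃ ρ : ℝ≥0, 0 < ρ ∧ ∃ C, HasUniformTaylorSeriesOn 𝕜 f (Metric.ball x ρ) ρ C := by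
  obtain ⟨ρ, hρ₀, hρr⟩ := ENNReal.lt_iff_exists_nnreal_btwn.1 h.r_pos
  have hρ₂ : 0 < ρ / 2 := half_pos (by exact_mod_cast hρ₀)
  have hρ : ((ρ / 2 + ρ / 2 : ℝ≥0) : ℝ≥0∞) < p.radius := by
    rw [add_halves]
    exact hρr.trans_le h.r_le
  obtain ⟨C, hC⟩ := p.exists_nnnorm_changeOrigin_mul_pow_le hρ
  refine ⟨ρ / 2, hρ₂, C, fun y hy => ?_⟩
  have hyx : ‖y - x‖₊ ≤ ρ / 2 := by
    rw [Metric.mem_ball, dist_eq_norm] at hy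
    exact hy.le
  have hρ_le : ((‖y - x‖₊ + ρ / 2 : ℝ≥0) : ℝ≥0∞) ≤ r :=
    le_trans (by gcongr; exact (add_le_add_left hyx _).trans (add_halves ρ).le) hρr.le
  have hball : HasFPowerSeriesOnBall f (p.changeOrigin (y - x)) y (ρ / 2 : ℝ≥0) := by
    have := h.changeOrigin (y := y - x)
      (lt_of_lt_of_le (by exact_mod_cast lt_add_of_pos_right _ hρ₂) hρ_le)
    rw [add_sub_cancel] at this
    refine this.mono (by exact_mod_cast hρ₂) (ENNReal.le_sub_of_add_le_left ENNReal.coe_ne_top ?_)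
    exact_mod_cast hρ_le
  refine ⟨hball.hasFPowerSeriesOnBall_taylorSeries, fun n => ?_⟩
  calc ‖taylorSeries 𝕜 f y n‖ * ((ρ / 2 : ℝ≥0) : ℝ) ^ n
      ≤ ‖p.changeOrigin (y - x) n‖ * ((ρ / 2 : ℝ≥0) : ℝ) ^ n := by
        gcongr
        exact hball.norm_taylorSeries_le n
    _ ≤ C := by exact_mod_cast hC (y - x) hyx n

theorem IsCompact.exists_hasUniformTaylorSeriesOn {K : Set E} (hK : IsCompact K)
    (hf : ∀ x ∈ K, AnalyticAt 𝕜 f x) :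
    ∃ r : ℝ≥0, 0 < r ∧ ∃ C, HasUniformTaylorSeriesOn 𝕜 f K r C := by
  refine hK.induction_on
    (p := fun s => ∃ r : ℝ≥0, 0 < r ∧ ∃ C, HasUniformTaylorSeriesOn 𝕜 f s r C)
    ⟨1, one_pos, 0, fun _ h => h.elim⟩ ?_ ?_ ?_
  · rintro s t hst ⟨r, hr, C, h⟩
    exact ⟨r, hr, C, h.mono hst hr le_rfl le_rfl⟩
  · rintro s t ⟨r, hr, C, hs⟩ ⟨r', hr', C', ht⟩
    refine ⟨min r r', lt_min hr hr', max C C', fun y hy => ?_⟩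
    rcases hy with hy | hy
    · exact hs.mono subset_rfl (lt_min hr hr') (min_le_left _ _) (le_max_left _ _) y hy
    · exact ht.mono subset_rfl (lt_min hr hr') (min_le_right _ _) (le_max_right _ _) y hy
  · intro x hx
    obtain ⟨p, R, hp⟩ := hf x hx
    obtain ⟨r, hr, C, h⟩ := hp.exists_hasUniformTaylorSeriesOn_ball
    exact ⟨Metric.ball x r,
      mem_nhdsWithin_of_mem_nhds (Metric.ball_mem_nhds x (by exact_mod_cast hr)), r, hr, C, h⟩

theorem AnalyticOnNhd.continuousOn_taylorSeries {s : Set E} (h : AnalyticOnNhd 𝕜 f s) (n : ℕ) :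
    ContinuousOn (fun x => taylorSeries 𝕜 f x n) s :=
  (h.iteratedFDeriv n).continuousOn.const_smul ((n ! : 𝕜)⁻¹)

end Taylor

section Integral

variable {α E G : Type*} [MeasurableSpace α] {μ : Measure α} [NormedAddCommGroup E]
  [NormedSpace ℝ E] [NormedAddCommGroup G] [NormedSpace ℝ G]

theorem hasFPowerSeriesOnBall_integral {F : α → E → G} {q : α → FormalMultilinearSeries ℝ E G}
    {x : E} {r : ℝ≥0} {C : α → ℝ} (hr : 0 < r)
    (hq : ∀ n, AEStronglyMeasurable (fun a => q a n) μ) (hC : Integrable C μ)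
    (hqC : ∀ᵐ a ∂μ, ∀ n, ‖q a n‖ * (r : ℝ) ^ n ≤ C a)
    (hF : ∀ᵐ a ∂μ, ∀ y ∈ Metric.eball (0 : E) r,
      HasSum (fun n => q a n fun _ => y) (F a (x + y))) :
    HasFPowerSeriesOnBall (fun y => ∫ a, F a y ∂μ) (fun n => ∫ a, q a n ∂μ) x r := by
  have hq_int : ∀ n, Integrable (fun a => q a n) μ := fun n => by
    refine (hC.div_const ((r : ℝ) ^ n)).mono' (hq n) ?_
    filter_upwards [hqC] with a ha
    rw [le_div_iff₀ (by positivity)]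
    exact ha n
  have hQ : ∀ n, ‖∫ a, q a n ∂μ‖ * (r : ℝ) ^ n ≤ ∫ a, C a ∂μ := fun n =>
    calc ‖∫ a, q a n ∂μ‖ * (r : ℝ) ^ n ≤ (∫ a, ‖q a n‖ ∂μ) * (r : ℝ) ^ n := by
          gcongr
          exact norm_integral_le_integral_norm _
      _ = ∫ a, ‖q a n‖ * (r : ℝ) ^ n ∂μ := (integral_mul_const _ _).symm
      _ ≤ ∫ a, C a ∂μ :=
          integral_mono_ae ((hq_int n).norm.mul_const _) hC (hqC.mono fun a ha => ha n)
  refine ⟨FormalMultilinearSeries.le_radius_of_bound _ _ hQ, by exact_mod_cast hr,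
    fun {y} hy => ?_⟩
  have hyr : ‖y‖ / r < 1 := by
    rw [div_lt_one (by exact_mod_cast hr)]
    simpa [Metric.mem_eball, edist_zero_right, enorm_eq_nnnorm] using hy
  have hterm_int : ∀ n, Integrable (fun a => q a n fun _ => y) μ := fun n =>
    (ContinuousMultilinearMap.apply ℝ (fun _ : Fin n => E) G fun _ => y).integrable_comp
      (hq_int n)
  have hterm_norm : ∀ n, ∫ a, ‖q a n fun _ => y‖ ∂μ ≤ (∫ a, C a ∂μ) * (‖y‖ / r) ^ n := by
    intro n
    rw [← integral_mul_const]
    refine integral_mono_ae (hterm_int n).norm (hC.mul_const _) ?_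
    filter_upwards [hqC] with a ha
    calc ‖q a n fun _ => y‖ ≤ ‖q a n‖ * ‖y‖ ^ n :=
          (q a n).le_opNorm_mul_pow_of_le (pi_norm_const_le y)
      _ = ‖q a n‖ * (r : ℝ) ^ n * (‖y‖ / r) ^ n := by
          rw [div_pow, mul_assoc, mul_div_cancel₀ _ (by positivity)]
      _ ≤ C a * (‖y‖ / r) ^ n := by gcongr; exact ha n
  have hsum := hasSum_integral_of_summable_integral_norm hterm_int
    (Summable.of_nonneg_of_le (fun n => integral_nonneg fun a => norm_nonneg _) hterm_norm
      ((summable_geometric_of_lt_one (by positivity) hyr).mul_left _))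
  simp only [← ContinuousMultilinearMap.integral_apply (hq_int _)] at hsum
  convert hsum using 1
  refine integral_congr_ae ?_
  filter_upwards [hF] with a ha
  exact (ha y hy).tsum_eq.symm

end Integral

theorem analyticAt_setIntegral_Ioc_smul_comp_smul {X Y : Type*} [NormedAddCommGroup X]
    [NormedSpace ℝ X] [NormedAddCommGroup Y] [NormedSpace ℝ Y] [CompleteSpace Y] {U : Set X}
    {A : X → Y} {f : ℝ → ℝ} {w₀ : X} (hA : AnalyticOnNhd ℝ A U)
    (hf : IntegrableOn f (Set.Ioc 0 1)) (hseg : Set.MapsTo (fun τ : ℝ => τ • w₀) (Set.Icc 0 1) U) :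
    AnalyticAt ℝ (fun w => ∫ τ in Set.Ioc 0 1, f τ • A (τ • w)) w₀ := by
  set K := (fun τ : ℝ => τ • w₀) '' Set.Icc 0 1
  obtain ⟨r, hr, C, hT⟩ := (isCompact_Icc.image (by fun_prop)).exists_hasUniformTaylorSeriesOn
    (Set.forall_mem_image.2 fun τ hτ => hA _ (hseg hτ))
  have h_ae : ∀ᵐ τ ∂volume.restrict (Set.Ioc (0:ℝ) 1), τ • w₀ ∈ K ∧ ‖τ‖ ≤ 1 :=
    ae_restrict_of_forall_mem measurableSet_Ioc fun τ hτ =>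
      ⟨Set.mem_image_of_mem _ (Set.Ioc_subset_Icc_self hτ),
        abs_le.2 ⟨by linarith [hτ.1], hτ.2⟩⟩
  refine (hasFPowerSeriesOnBall_integral
    (q := fun τ n => f τ • τ ^ n • taylorSeries ℝ A (τ • w₀) n) (C := fun τ => ‖f τ‖ * C)
    hr (fun n => ?_) (hf.norm.mul_const C) ?_ ?_).analyticAt
  · exact hf.1.smul ((continuous_pow n).aestronglyMeasurable.smul
      ((((hA.continuousOn_taylorSeries n).comp (by fun_prop) hseg).mono
        Set.Ioc_subset_Icc_self).aestronglyMeasurable measurableSet_Ioc))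
  · filter_upwards [h_ae] with τ ⟨hτK, hτ1⟩ n
    rw [norm_smul, norm_smul, norm_pow, mul_assoc, mul_assoc]
    gcongr
    exact (mul_le_mul (pow_le_one₀ (norm_nonneg _) hτ1) ((hT _ hτK).2 n) (by positivity)
      zero_le_one).trans_eq (one_mul C)
  · filter_upwards [h_ae] with τ ⟨hτK, hτ1⟩ y hy
    exact ((hT _ hτK).1.hasSum_comp_smul hτ1 hy).const_smul (f τ)

theorem pettis_integral_analytic_general {X Y : Type*} [NormedAddCommGroup X] [NormedSpace ℝ X]
    [NormedAddCommGroup Y] [NormedSpace ℝ Y] [CompleteSpace Y]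
    (U : Set X)
    (hstar : ∀ w ∈ U, ∀ τ ∈ Set.Icc (0:ℝ) 1, τ • w ∈ U)
    (A : X → Y) (hA : AnalyticOnNhd ℝ A U)
    (f : ℝ → ℝ) (hf : IntervalIntegrable f volume 0 1) :
    ∃ Φ : X → Y,
      (∀ w ∈ U, ∀ L : Y →L[ℝ] ℝ, L (Φ w) = ∫ τ in (0:ℝ)..1, f τ * L (A (τ • w))) ∧
      AnalyticOnNhd ℝ Φ U := by
  have hseg : ∀ w ∈ U, Set.MapsTo (fun τ : ℝ => τ • w) (Set.Icc 0 1) U := hstar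
  refine ⟨fun w => ∫ τ in Set.Ioc 0 1, f τ • A (τ • w), fun w hw L => ?_,
    fun w hw => analyticAt_setIntegral_Ioc_smul_comp_smul hA hf.1 (hseg w hw)⟩
  have hint : IntegrableOn (fun τ => f τ • A (τ • w)) (Set.Ioc 0 1) :=
    hf.1.smul_continuousOn_of_subset (hA.continuousOn.comp (by fun_prop) (hseg w hw))
      measurableSet_Ioc isCompact_Icc Set.Ioc_subset_Icc_self
  rw [intervalIntegral.integral_of_le zero_le_one, ← L.integral_comp_comm hint]
  simp

/-- Theorem 9.3: for `U ⊆ X` open and star-shaped with respect to `0`,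
`A : U → Y` real analytic and `f ∈ L¹([0,1])`, the Pettis integral
`Φ(w) = ∫₀¹ f(τ) A(τw) dτ` exists for every `w ∈ U` and `Φ` is real analytic on `U`. -/
theorem pettis_integral_analytic {X Y : Type*} [NormedAddCommGroup X] [NormedSpace ℝ X]
    [NormedAddCommGroup Y] [NormedSpace ℝ Y] [CompleteSpace Y]
    (U : Set X) (hU : IsOpen U)
    (hstar : ∀ w ∈ U, ∀ τ ∈ Set.Icc (0:ℝ) 1, τ • w ∈ U)
    (A : X → Y) (hA : AnalyticOnNhd ℝ A U)
    (f : ℝ → ℝ) (hf : IntervalIntegrable f volume 0 1) :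
    ∃ Φ : X → Y,
      (∀ w ∈ U, ∀ L : Y →L[ℝ] ℝ, L (Φ w) = ∫ τ in (0:ℝ)..1, f τ * L (A (τ • w))) ∧
      AnalyticOnNhd ℝ Φ U :=
  pettis_integral_analytic_general U hstar A hA f hf
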